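/- Let A be a C*-algebra, κ an infinite cardinal, and {A_ξ : ξ < κ} an irredundant set in A. Then there exists an irredundant set {B_ξ : ξ < κ} in A consisting of self-adjoint elements, where each B_ξ lies in the *-subalgebra generated by A_ξ. -/

import Mathlib

/-- A subset `X` of a C*-algebra is irredundant if no element of `X` belongs to the closed
*-subalgebra generated by the remaining elements. -/
def Irredundant {A : Type*} [NonUnitalCStarAlgebra A] (X : Set A) : Prop :=
  ∀ a ∈ X, a ∉ closure (NonUnitalStarAlgebra.adjoin ℂ (X \ {a}) : Set A)

/-- Let `A` be a C*-algebra, `κ` an infinite cardinal, and `{A_ξ : ξ < κ}` an irredundant set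
in `A`.  Then there is an irredundant set `{B_ξ : ξ < κ}` in `A` consisting of self-adjoint
elements, where each `B_ξ` lies in the *-subalgebra generated by `A_ξ`. -/
theorem exists_selfAdjoint_irredundant
    {𝔸 : Type*} [NonUnitalCStarAlgebra 𝔸] (κ : Cardinal) (hκ : Cardinal.aleph0 ≤ κ)
    (a : κ.ord.ToType → 𝔸) (hinj : Function.Injective a)
    (hirr : Irredundant (Set.range a)) :
    ∃ b : κ.ord.ToType → 𝔸, Function.Injective b ∧
      (∀ ξ, IsSelfAdjoint (b ξ)) ∧
      (∀ ξ, b ξ ∈ NonUnitalStarAlgebra.adjoin ℂ {a ξ}) ∧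
      Irredundant (Set.range b) := by
  classical
  set re : 𝔸 → 𝔸 := fun x => (2:ℂ)⁻¹ • (x + star x) with hre
  set im : 𝔸 → 𝔸 := fun x => (2 * Complex.I)⁻¹ • (x - star x) with him
  have hdecomp : ∀ x : 𝔸, re x + Complex.I • im x = x := by
    intro x
    rw [hre, him]
    simp only
    rw [smul_smul,
      show Complex.I * (2 * Complex.I)⁻¹ = (2:ℂ)⁻¹ by field_simp [Complex.I_ne_zero],
      ← smul_add]
    module
  have hre_sa : ∀ x : 𝔸, IsSelfAdjoint (re x) := by
    intro x
    rw [hre, IsSelfAdjoint]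
    simp only
    rw [star_smul, star_add, star_star]
    simp [add_comm]
  have him_sa : ∀ x : 𝔸, IsSelfAdjoint (im x) := by
    intro x
    rw [him, IsSelfAdjoint]
    simp only
    rw [star_smul, star_sub, star_star,
      show (star (2 * Complex.I)⁻¹ : ℂ) = -(2 * Complex.I)⁻¹ by simp [Complex.ext_iff],
      neg_smul, ← smul_neg, neg_sub]
  have hre_mem : ∀ x : 𝔸, re x ∈ NonUnitalStarAlgebra.adjoin ℂ {x} := fun x =>
    SMulMemClass.smul_mem _ (add_mem (NonUnitalStarAlgebra.self_mem_adjoin_singleton ℂ x)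
      (star_mem (NonUnitalStarAlgebra.self_mem_adjoin_singleton ℂ x)))
  have him_mem : ∀ x : 𝔸, im x ∈ NonUnitalStarAlgebra.adjoin ℂ {x} := fun x =>
    SMulMemClass.smul_mem _ (sub_mem (NonUnitalStarAlgebra.self_mem_adjoin_singleton ℂ x)
      (star_mem (NonUnitalStarAlgebra.self_mem_adjoin_singleton ℂ x)))
  set C : κ.ord.ToType → NonUnitalStarSubalgebra ℂ 𝔸 := fun ξ =>
    (NonUnitalStarAlgebra.adjoin ℂ (Set.range a \ {a ξ})).topologicalClosure with hC
  have key : ∀ ξ, a ξ ∉ C ξ := fun ξ => hirr _ ⟨ξ, rfl⟩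
  set b : κ.ord.ToType → 𝔸 := fun ξ => if re (a ξ) ∈ C ξ then im (a ξ) else re (a ξ) with hb
  have hbmem : ∀ ξ, b ξ ∈ NonUnitalStarAlgebra.adjoin ℂ {a ξ} := by
    intro ξ
    rw [hb]
    simp only
    split_ifs
    · exact him_mem _
    · exact hre_mem _
  have hbC : ∀ ξ, b ξ ∉ C ξ := by
    intro ξ
    rw [hb]
    simp only
    split_ifs with h
    · intro h2
      exact key ξ (hdecomp (a ξ) ▸ add_mem h (SMulMemClass.smul_mem _ h2))
    · exact h
  -- for η ≠ ξ, b η belongs to C ξ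
  have hsub : ∀ ξ η, η ≠ ξ → b η ∈ C ξ := by
    intro ξ η hne
    have h1 : NonUnitalStarAlgebra.adjoin ℂ {a η} ≤ C ξ := by
      refine le_trans (NonUnitalStarAlgebra.adjoin_le ?_)
        (NonUnitalStarSubalgebra.le_topologicalClosure _)
      rintro x rfl
      exact NonUnitalStarAlgebra.subset_adjoin ℂ _ ⟨⟨η, rfl⟩, fun h => hne (hinj h)⟩
    exact h1 (hbmem η)
  have hbinj : Function.Injective b := by
    intro ξ η h
    by_contra hne
    exact hbC ξ (h ▸ hsub ξ η fun he => hne he.symm)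
  refine ⟨b, hbinj, ?_, hbmem, ?_⟩
  · intro ξ
    rw [hb]
    simp only
    split_ifs
    · exact him_sa _
    · exact hre_sa _
  · rintro x ⟨ξ, rfl⟩
    intro hx
    apply hbC ξ
    have hsubset : (Set.range b \ {b ξ}) ⊆ (C ξ : Set 𝔸) := by
      rintro y ⟨⟨η, rfl⟩, hy⟩
      exact hsub ξ η fun he => hy (he ▸ rfl)
    have hle : (NonUnitalStarAlgebra.adjoin ℂ (Set.range b \ {b ξ}) : Set 𝔸) ⊆ (C ξ : Set 𝔸) :=
      NonUnitalStarAlgebra.adjoin_le hsubset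
    have : closure (NonUnitalStarAlgebra.adjoin ℂ (Set.range b \ {b ξ}) : Set 𝔸) ⊆ (C ξ : Set 𝔸) :=
      closure_minimal hle ((NonUnitalStarAlgebra.adjoin ℂ (Set.range a \ {a ξ})).isClosed_topologicalClosure)
    exact this hx
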